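/- The only point of ℙ²(ℂ) lying simultaneously on the three curves {(x+3y)·C6 = 0}, {C7 = 0}, and {(x+3y)·C3 = 0}, other than the five points [2:2:1], [-2:2:1], [3:1:1], [-3:1:1], [0:5:1], is [0:0:1]; that is, the common zero locus over ℂ of (x+3y)·C6, C7, and (x+3y)·C3 is exactly {[0:0:1], [2:2:1], [-2:2:1], [3:1:1], [-3:1:1], [0:5:1]}. -/
import Mathlib


/-- C3 evaluated at (x, y, z) ∈ ℂ³. -/
def c3fun (x y z : ℂ) : ℂ :=
  17 * x ^ 3 - 924 * x ^ 2 * y - 153 * x * y ^ 2 - 996 * y ^ 3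
    + 1164 * x ^ 2 * z + 544 * x * y * z + 6516 * y ^ 2 * z
    - 544 * x * z ^ 2 - 7680 * y * z ^ 2

/-- C6 evaluated at (x, y, z) ∈ ℂ³. -/
def c6fun (x y z : ℂ) : ℂ :=
  289 * x ^ 6 + 754326 * x ^ 4 * y ^ 2 + 2610657 * x ^ 2 * y ^ 4
    + 1906344 * y ^ 6 - 2013848 * x ^ 4 * y * z - 17946576 * x ^ 2 * y ^ 3 * z
    - 22212504 * y ^ 5 * z + 1336400 * x ^ 4 * z ^ 2
    + 35856160 * x ^ 2 * y ^ 2 * z ^ 2 + 89326224 * y ^ 4 * z ^ 2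
    - 22270208 * x ^ 2 * y * z ^ 3 - 146421504 * y ^ 3 * z ^ 3
    + 295936 * x ^ 2 * z ^ 4 + 84049920 * y ^ 2 * z ^ 4

/-- C7 evaluated at (x, y, z) ∈ ℂ³. -/
def c7fun (x y z : ℂ) : ℂ :=
  8683464 * x ^ 6 * y - 494984955 * x ^ 4 * y ^ 3 - 1064093674 * x ^ 2 * y ^ 5
    - 558251235 * y ^ 7 - 11358312 * x ^ 6 * z + 1253331746 * x ^ 4 * y ^ 2 * z
    + 8340957732 * x ^ 2 * y ^ 4 * z + 7286240034 * y ^ 6 * z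
    - 920312219 * x ^ 4 * y * z ^ 2 - 17394911410 * x ^ 2 * y ^ 3 * z ^ 2
    - 32292289971 * y ^ 5 * z ^ 2 + 179839940 * x ^ 4 * z ^ 3
    + 11716330200 * x ^ 2 * y ^ 2 * z ^ 3 + 55580514660 * y ^ 4 * z ^ 3
    - 1270036000 * x ^ 2 * y * z ^ 4 - 32468306400 * y ^ 3 * z ^ 4

/-- The common zero locus in ℙ²(ℂ) of (x+3y)·C6, C7 and (x+3y)·C3 is exactly
the six points [0:0:1], [2:2:1], [-2:2:1], [3:1:1], [-3:1:1], [0:5:1]. -/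
theorem stmt14 :
    ∀ x y z : ℂ, (x, y, z) ≠ (0, 0, 0) →
      (((x + 3 * y) * c6fun x y z = 0 ∧ c7fun x y z = 0 ∧
          (x + 3 * y) * c3fun x y z = 0) ↔
        ∃ t : ℂ, t ≠ 0 ∧
          ((x, y, z) = (0, 0, t) ∨ (x, y, z) = (2 * t, 2 * t, t) ∨
           (x, y, z) = (-2 * t, 2 * t, t) ∨ (x, y, z) = (3 * t, t, t) ∨
           (x, y, z) = (-3 * t, t, t) ∨ (x, y, z) = (0, 5 * t, t))) := by
  intro x y z hxyz
  constructor
  · rintro ⟨h6, h7, h3⟩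
    simp only [c6fun, c7fun, c3fun] at h6 h7 h3
    by_cases hz : z = 0
    · exfalso
      subst hz
      have hy : y = 0 := by
        have h13 : y ^ 13 = 0 := by
          linear_combination ((8868427077683560499909/34675215995012489280199065600 : ℂ) * x^5*y^1 + (-8868427077683560499909/11558405331670829760066355200 : ℂ) * x^4*y^2 + (-70018786079791193264902439/4715829375321698542107072921600 : ℂ) * x^3*y^3 + (70018786079791193264902439/1571943125107232847369024307200 : ℂ) * x^2*y^4 + (-44545515543268674185979751/2829497625193019125264243752960 : ℂ) * x^1*y^5 + (44545515543268674185979751/943165875064339708421414584320 : ℂ) * y^6) * h6 + ((-416690648765848823/48953246110605867219104563200 : ℂ) * x^6 + (-5798338564995785549687/261990520851205474561504051200 : ℂ) * x^4*y^2 + (76664655667058408979307/523981041702410949123008102400 : ℂ) * x^2*y^4 + (94720667812086804936629/196492890638404105921128038400 : ℂ) * y^6) * h7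
        exact pow_eq_zero_iff (by norm_num) |>.mp h13
      subst hy
      have hx : x = 0 := by
        have h7' : x ^ 7 = 0 := by linear_combination (1/289 : ℂ) * h6
        exact pow_eq_zero_iff (by norm_num) |>.mp h7'
      exact hxyz (by simp [hx])
    · by_cases hl : x + 3 * y = 0
      · have hx : x = -3 * y := by linear_combination hl
        subst hx
        have h7' : y ^ 3 * (y - z) ^ 4 = 0 := by
          linear_combination (-1/43898630400 : ℂ) * h7
        rcases mul_eq_zero.mp h7' with h | h
        · have hy : y = 0 := pow_eq_zero_iff (by norm_num) |>.mp h
          subst hy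
          exact ⟨z, hz, Or.inl (by norm_num)⟩
        · have hy : y = z := by
            have h' := pow_eq_zero_iff (n := 4) (by norm_num) |>.mp h
            linear_combination h'
          exact ⟨z, hz, Or.inr (Or.inr (Or.inr (Or.inr (Or.inl (by rw [hy])))))⟩
      · have hc6 : (289*x^6 + 754326*x^4*y^2 + 2610657*x^2*y^4
            + 1906344*y^6 - 2013848*x^4*y*z - 17946576*x^2*y^3*z
            - 22212504*y^5*z + 1336400*x^4*z^2
            + 35856160*x^2*y^2*z^2 + 89326224*y^4*z^2
            - 22270208*x^2*y*z^3 - 146421504*y^3*z^3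
            + 295936*x^2*z^4 + 84049920*y^2*z^4 : ℂ) = 0 := by
          rcases mul_eq_zero.mp h6 with h | h
          · exact absurd h hl
          · linear_combination h
        have hc3 : (17*x^3 - 924*x^2*y - 153*x*y^2 - 996*y^3
            + 1164*x^2*z + 544*x*y*z + 6516*y^2*z
            - 544*x*z^2 - 7680*y*z^2 : ℂ) = 0 := by
          rcases mul_eq_zero.mp h3 with h | h
          · exact absurd h hl
          · linear_combination h
        have hE : 12*x^2*z - 19*y^3 + 141*y^2*z - 230*y*z^2 = 0 := by
          have h4 : z * (12*x^2*z - 19*y^3 + 141*y^2*z - 230*y*z^2) ^ 4 = 0 := by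
            linear_combination ((-179563180813/10482679808 : ℂ) * x^4*y^5*z^1 + (56686588485983/66138144768 : ℂ) * x^3*y^6*z^1 + (27064827183533/15724019712 : ℂ) * x^2*y^7*z^1 + (12265672946209/7348682752 : ℂ) * x^1*y^8*z^1 + (53121561354085/31448039424 : ℂ) * y^9*z^1 + (317595713359/1310334976 : ℂ) * x^4*y^4*z^2 + (-878669772572675/66138144768 : ℂ) * x^3*y^5*z^2 + (-2321622463169073/89102778368 : ℂ) * x^2*y^6*z^2 + (-127161133099573/3890479104 : ℂ) * x^1*y^7*z^2 + (-9106292997379873/267308335104 : ℂ) * y^8*z^2 + (-2130890482559/1965502464 : ℂ) * x^4*y^3*z^3 + (64878581736863/918585344 : ℂ) * x^3*y^4*z^3 + (70861592235350539/534616670208 : ℂ) * x^2*y^5*z^3 + (2021605386628649/8267268096 : ℂ) * x^1*y^6*z^3 + (8113899414165749/31448039424 : ℂ) * y^7*z^3 + (51293879245/40947968 : ℂ) * x^4*y^2*z^4 + (-561412420010371/4133634048 : ℂ) * x^3*y^3*z^4 + (-4882048084522087/22275694592 : ℂ) * x^2*y^4*z^4 + (-206076127095391/243154944 : ℂ) *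 x^1*y^5*z^4 + (-57105709105932859/66827083776 : ℂ) * y^6*z^4 + (20736/17 : ℂ) * x^5*z^5 + (241840082880/2719201 : ℂ) * x^4*y^1*z^5 + (-9967826444338301/8783972352 : ℂ) * x^3*y^2*z^5 + (-3539144352641913749/568030212096 : ℂ) * x^2*y^3*z^5 + (-1588009087099733/8783972352 : ℂ) * x^1*y^4*z^5 + (-3187947479467016011/568030212096 : ℂ) * y^5*z^5 + (-1170574848/9409 : ℂ) * x^4*z^6 + (1774561883616/476561 : ℂ) * x^3*y^1*z^6 + (1206623356727863693/71003776512 : ℂ) * x^2*y^2*z^6 + (25834959560223067/2195993088 : ℂ) * x^1*y^3*z^6 + (3747175954669522243/71003776512 : ℂ) * y^4*z^6 + (-1352927950848/476561 : ℂ) * x^3*z^7 + (-566111385995904/46226417 : ℂ) * x^2*y^1*z^7 + (-8068588893514147/274499136 : ℂ) * x^1*y^2*z^7 + (-62208393794584097/554717004 : ℂ) * y^3*z^7 + (3558204260352/2719201 : ℂ) * x^2*z^8 + (10147921781760/476561 : ℂ) * x^1*y^1*z^8 + (3283163918254080/46226417 : ℂ) * y^2*z^8) * hc3 + ((179563180813/178205556736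 : ℂ) * x^1*y^5*z^1 + (-1395571229441/18981647548416 : ℂ) * y^6*z^1 + (-317595713359/22275694592 : ℂ) * x^1*y^4*z^2 + (26580899272925/18981647548416 : ℂ) * y^5*z^2 + (2130890482559/33413541888 : ℂ) * x^1*y^3*z^3 + (-2475882455233/263633993728 : ℂ) * y^4*z^3 + (-51293879245/696115456 : ℂ) * x^1*y^2*z^4 + (27865911784285/1186352971776 : ℂ) * y^3*z^4 + (-61563040704/46226417 : ℂ) * x^1*y^1*z^5 + (1204352127715/148294121472 : ℂ) * y^2*z^5 + (111193883136/46226417 : ℂ) * x^1*z^6 + (-799437600/8045471 : ℂ) * y^1*z^6) * hc6 + ((-89459241413/25572497391616 : ℂ) * y^5*z^1 + (158147503447/3196562173952 : ℂ) * y^4*z^2 + (-353379115637/1598281086976 : ℂ) * y^3*z^3 + (47828921293/199785135872 : ℂ) * y^2*z^4 + (158727409920/13266981679 : ℂ) * y^1*z^5 + (-226295119872/13266981679 : ℂ) * z^6) * h7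
          rcases mul_eq_zero.mp h4 with h | h
          · exact absurd h hz
          · exact pow_eq_zero_iff (by norm_num) |>.mp h
        have hbig : z^3 * (y * (y - z)^2 * (y - 2*z)^2 * (y - 5*z)) = 0 := by
          linear_combination ((147311472785851872599210457/2901239407855845797665570281515264 : ℂ) * y^3 + (-358724430278758409270992479/145275610997199936849233268882944 : ℂ) * y^2*z^1 + (1165447415240070860624051022207/98642139867098757120629389571518976 : ℂ) * y^1*z^2 + (-3/850816 : ℂ) * z^3) * hc6 + ((-2307185277543138852593/1365289133108633316548503661889536 : ℂ) * y^2 + (-803852908454445250995317/290551221994399873698466537765888 : ℂ) * y^1*z^1 + (74927738838079490844527745/6165133741693672320039336848219936 : ℂ) * z^2) * h7 + ((1717358582863810897294476471/833719431834719867140506564608 : ℂ) * x^4*y^2 + (2947752076569411842409086173/416859715917359933570253282304 : ℂ) * x^2*y^4 + (4288770489962651209227825039/833719431834719867140506564608 : ℂ) * y^6 + (-9752650843272686669400122599/833719431834719867140506564608 : ℂ) * x^4*y^1*z^1 + (-73915626301354350529613753917/416859715917359933570253282304 : ℂ) * x^2*y^3*z^1 + (-22426593350836870744506811305/119102775976388552448643794944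 : ℂ) * y^5*z^1 + (2415387189180524003117374817/208429857958679966785126641152 : ℂ) * x^4*z^2 + (66441034362977305249569328031/104214928979339983392563320576 : ℂ) * x^2*y^2*z^2 + (13014219286675535164747258311/9062167737333911599353332224 : ℂ) * y^4*z^2 + (-2649550053540431087216612999/3721961749262142264020118592 : ℂ) * x^2*y^1*z^3 + (-2086706629939896308879975071/531708821323163180574302656 : ℂ) * y^3*z^3 + (171418884072501461378201775/814179132651093620254400942 : ℂ) * x^2*z^4 + (3457330202999903954552834107/814179132651093620254400942 : ℂ) * y^2*z^4 + (-231383/152881 : ℂ) * y^1*z^5 + (2/23 : ℂ) * z^6) * hE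
        have hG : y * (y - z)^2 * (y - 2*z)^2 * (y - 5*z) = 0 := by
          rcases mul_eq_zero.mp hbig with h | h
          · exact absurd (pow_eq_zero_iff (by norm_num) |>.mp h) hz
          · exact h
        rcases mul_eq_zero.mp hG with h | h
        · rcases mul_eq_zero.mp h with h | h
          · rcases mul_eq_zero.mp h with hy | h
            · subst hy
              have hx2 : x ^ 2 * (12 * z) = 0 := by linear_combination hE
              rcases mul_eq_zero.mp hx2 with h | h
              · have hx : x = 0 := pow_eq_zero_iff (by norm_num) |>.mp h
                exact ⟨z, hz, Or.inl (by rw [hx])⟩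
              · exact absurd (by linear_combination (1/12 : ℂ) * h) hz
            · have hy : y = z := by
                have h' := pow_eq_zero_iff (n := 2) (by norm_num) |>.mp h
                linear_combination h'
              rw [hy] at hE
              have hfac : (x - 3 * z) * (x + 3 * z) * (12 * z) = 0 := by
                linear_combination hE
              rcases mul_eq_zero.mp hfac with h | h
              · rcases mul_eq_zero.mp h with h | h
                · have hx : x = 3 * z := by linear_combination h
                  exact ⟨z, hz, Or.inr (Or.inr (Or.inr (Or.inl (by rw [hx, hy]))))⟩
                · have hx : x = -3 * z := by linear_combination h
                  exact ⟨z, hz, Or.inr (Or.inr (Or.inr (Or.inr (Or.inl (by rw [hx, hy])))))⟩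
              · exact absurd (by linear_combination (1/12 : ℂ) * h) hz
          · have hy : y = 2 * z := by
              have h' := pow_eq_zero_iff (n := 2) (by norm_num) |>.mp h
              linear_combination h'
            rw [hy] at hE
            have hfac : (x - 2 * z) * (x + 2 * z) * (12 * z) = 0 := by
              linear_combination hE
            rcases mul_eq_zero.mp hfac with h | h
            · rcases mul_eq_zero.mp h with h | h
              · have hx : x = 2 * z := by linear_combination h
                exact ⟨z, hz, Or.inr (Or.inl (by rw [hx, hy]))⟩
              · have hx : x = -2 * z := by linear_combination h
                exact ⟨z, hz, Or.inr (Or.inr (Or.inl (by rw [hx, hy])))⟩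
            · exact absurd (by linear_combination (1/12 : ℂ) * h) hz
        · have hy : y = 5 * z := by linear_combination h
          rw [hy] at hE
          have hx2 : x ^ 2 * (12 * z) = 0 := by linear_combination hE
          rcases mul_eq_zero.mp hx2 with h | h
          · have hx : x = 0 := pow_eq_zero_iff (by norm_num) |>.mp h
            exact ⟨z, hz, Or.inr (Or.inr (Or.inr (Or.inr (Or.inr (by rw [hx, hy])))))⟩
          · exact absurd (by linear_combination (1/12 : ℂ) * h) hz
  · rintro ⟨t, ht, h | h | h | h | h | h⟩ <;>
      (simp only [Prod.mk.injEq] at h; obtain ⟨rfl, rfl, rfl⟩ := h) <;>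
      refine ⟨by simp only [c6fun]; ring, by simp only [c7fun]; ring,
        by simp only [c3fun]; ring⟩
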